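/- Let d ∈ (0,1), A > 0, integer k ≥ 0, and parameters δ, CFS with 0 < δ ≤ CFS and CFS + δ ≤ d. Then the left branch of the WENO-ACM mapping, g(ω) = (d/2)·sgm(ω − CFS, δ, A, k) + d/2 for ω ∈ [0, d], satisfies: g is monotonically non-decreasing on [0, d]; 0 ≤ g(ω) ≤ d for all ω ∈ [0, d]; g(ω) = 0 for all ω ∈ [0, CFS − δ] (in particular g(0) = 0); and g(ω) = d for all ω ∈ [CFS + δ, d] (in particular g(d) = d and g is constant, hence has all derivatives equal to zero, on a neighborhood of d inside [0, d]). -/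
import Mathlib


/-- The smoothed sign function used in the WENO-ACM scheme. -/
noncomputable def sgm (δ A : ℝ) (k : ℕ) (x : ℝ) : ℝ :=
  if δ ≤ |x| then x / |x| else x / ((A * (δ ^ 2 - x ^ 2)) ^ (k + 3) + |x|)

/-- The left branch (ω ≤ d) of the WENO-ACM mapping function. -/
noncomputable def gACML (d A : ℝ) (k : ℕ) (δ CFS ω : ℝ) : ℝ :=
  d / 2 * sgm δ A k (ω - CFS) + d / 2

lemma sgm_odd (δ A : ℝ) (k : ℕ) (x : ℝ) : sgm δ A k (-x) = - sgm δ A k x := by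
  unfold sgm; rw [abs_neg, neg_sq]; split_ifs <;> ring

lemma sgm_one (δ A : ℝ) (k : ℕ) {x : ℝ} (hδ : 0 < δ) (h : δ ≤ x) :
    sgm δ A k x = 1 := by
  have hx : 0 < x := lt_of_lt_of_le hδ h
  rw [sgm, if_pos (by rwa [abs_of_pos hx]), abs_of_pos hx, div_self hx.ne']

lemma sgm_neg_one (δ A : ℝ) (k : ℕ) {x : ℝ} (hδ : 0 < δ) (h : x ≤ -δ) :
    sgm δ A k x = -1 := by
  have := sgm_one δ A k hδ (by linarith : δ ≤ -x)
  rw [sgm_odd] at this; linarith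

lemma sgm_nonneg (δ A : ℝ) (k : ℕ) {x : ℝ} (hδ : 0 < δ) (hA : 0 < A) (hx : 0 ≤ x) :
    0 ≤ sgm δ A k x := by
  rw [sgm]
  split_ifs with h
  · positivity
  · rw [abs_of_nonneg hx] at h ⊢
    have hP : 0 < (A * (δ ^ 2 - x ^ 2)) ^ (k + 3) := by
      have : 0 < δ ^ 2 - x ^ 2 := by nlinarith [not_le.mp h]
      positivity
    exact div_nonneg hx (by linarith)

lemma sgm_le_one (δ A : ℝ) (k : ℕ) {x : ℝ} (hδ : 0 < δ) (hA : 0 < A) :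
    sgm δ A k x ≤ 1 := by
  rw [sgm]
  split_ifs with h
  · rcases eq_or_ne x 0 with rfl | hx
    · simp
    · rw [div_le_one (abs_pos.mpr hx)]; exact le_abs_self x
  · rw [not_le] at h
    have hP : 0 < (A * (δ ^ 2 - x ^ 2)) ^ (k + 3) := by
      have : 0 < δ ^ 2 - x ^ 2 := by nlinarith [abs_nonneg x, sq_abs x]
      positivity
    rw [div_le_one (by positivity : (0:ℝ) < _ + |x|)]
    have := le_abs_self x
    linarith

lemma sgm_mono_nonneg (δ A : ℝ) (k : ℕ) {x₁ x₂ : ℝ} (hδ : 0 < δ) (hA : 0 < A)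
    (h0 : 0 ≤ x₁) (h12 : x₁ ≤ x₂) : sgm δ A k x₁ ≤ sgm δ A k x₂ := by
  by_cases h2 : δ ≤ x₂
  · rw [sgm_one δ A k hδ h2]; exact sgm_le_one δ A k hδ hA
  · rw [not_le] at h2
    have h1 : x₁ < δ := lt_of_le_of_lt h12 h2
    have hd1 : 0 < δ ^ 2 - x₁ ^ 2 := by nlinarith
    have hd2 : 0 < δ ^ 2 - x₂ ^ 2 := by nlinarith
    have hP1 : 0 < (A * (δ ^ 2 - x₁ ^ 2)) ^ (k + 3) := by positivity
    have hP2 : 0 < (A * (δ ^ 2 - x₂ ^ 2)) ^ (k + 3) := by positivity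
    have hPle : (A * (δ ^ 2 - x₂ ^ 2)) ^ (k + 3) ≤ (A * (δ ^ 2 - x₁ ^ 2)) ^ (k + 3) := by
      have hsq : x₁ ^ 2 ≤ x₂ ^ 2 := by nlinarith
      apply pow_le_pow_left₀ (by positivity)
      nlinarith
    rw [sgm, sgm, if_neg (by rw [abs_of_nonneg h0]; linarith),
      if_neg (by rw [abs_of_nonneg (by linarith : (0:ℝ) ≤ x₂)]; linarith),
      abs_of_nonneg h0, abs_of_nonneg (by linarith : (0:ℝ) ≤ x₂)]
    rw [div_le_div_iff₀ (by linarith) (by linarith)]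
    nlinarith

lemma sgm_mono (δ A : ℝ) (k : ℕ) (hδ : 0 < δ) (hA : 0 < A) :
    Monotone (sgm δ A k) := by
  intro x₁ x₂ h12
  rcases le_total 0 x₁ with h1 | h1
  · exact sgm_mono_nonneg δ A k hδ hA h1 h12
  · rcases le_total 0 x₂ with h2 | h2
    · calc sgm δ A k x₁ ≤ 0 := by
            have := sgm_nonneg δ A k hδ hA (by linarith : (0:ℝ) ≤ -x₁)
            rw [sgm_odd] at this; linarith
        _ ≤ sgm δ A k x₂ := sgm_nonneg δ A k hδ hA h2
    · have := sgm_mono_nonneg δ A k hδ hA (by linarith : (0:ℝ) ≤ -x₂)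
        (by linarith : -x₂ ≤ -x₁)
      rw [sgm_odd, sgm_odd] at this; linarith

lemma sgm_neg_one_le (δ A : ℝ) (k : ℕ) {x : ℝ} (hδ : 0 < δ) (hA : 0 < A) :
    -1 ≤ sgm δ A k x := by
  have := sgm_le_one δ A k (x := -x) hδ hA
  rw [sgm_odd] at this; linarith

/-- Let `d ∈ (0,1)`, `A > 0`, `k ≥ 0`, and parameters `δ, CFS` with `0 < δ ≤ CFS` and
`CFS + δ ≤ d`. Then the left branch `g(ω) = (d/2)·sgm(ω − CFS, δ, A, k) + d/2` of the
WENO-ACM mapping satisfies: `g` is monotonically non-decreasing on `[0, d]`;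
`0 ≤ g(ω) ≤ d` on `[0, d]`; `g(ω) = 0` on `[0, CFS − δ]` (in particular `g(0) = 0`);
and `g(ω) = d` on `[CFS + δ, d]` (in particular `g(d) = d` and `g` is constant on a
neighborhood of `d` inside `[0, d]`). -/
theorem wenoACM_left_branch (d A : ℝ) (k : ℕ) (δ CFS : ℝ)
    (hd : d ∈ Set.Ioo (0 : ℝ) 1) (hA : 0 < A)
    (hδ : 0 < δ) (hδCFS : δ ≤ CFS) (hCFS : CFS + δ ≤ d) :
    MonotoneOn (gACML d A k δ CFS) (Set.Icc (0 : ℝ) d) ∧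
    (∀ ω ∈ Set.Icc (0 : ℝ) d, 0 ≤ gACML d A k δ CFS ω ∧ gACML d A k δ CFS ω ≤ d) ∧
    (∀ ω ∈ Set.Icc (0 : ℝ) (CFS - δ), gACML d A k δ CFS ω = 0) ∧
    gACML d A k δ CFS 0 = 0 ∧
    (∀ ω ∈ Set.Icc (CFS + δ) d, gACML d A k δ CFS ω = d) ∧
    gACML d A k δ CFS d = d := by
  obtain ⟨hd0, hd1⟩ := hd
  have hzero : ∀ ω ∈ Set.Icc (0 : ℝ) (CFS - δ), gACML d A k δ CFS ω = 0 := by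
    intro ω hω
    have : sgm δ A k (ω - CFS) = -1 :=
      sgm_neg_one δ A k hδ (by have := hω.2; linarith)
    rw [gACML, this]; ring
  have hone : ∀ ω ∈ Set.Icc (CFS + δ) d, gACML d A k δ CFS ω = d := by
    intro ω hω
    have : sgm δ A k (ω - CFS) = 1 :=
      sgm_one δ A k hδ (by have := hω.1; linarith)
    rw [gACML, this]; ring
  refine ⟨?_, ?_, hzero, hzero 0 ⟨le_refl _, by linarith⟩, hone,
    hone d ⟨hCFS, le_refl _⟩⟩
  · intro a _ b _ hab
    have := sgm_mono δ A k hδ hA (by linarith : a - CFS ≤ b - CFS)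
    rw [gACML, gACML]
    nlinarith
  · intro ω _
    have h1 := sgm_le_one δ A k (x := ω - CFS) hδ hA
    have h2 := sgm_neg_one_le δ A k (x := ω - CFS) hδ hA
    rw [gACML]
    constructor <;> nlinarith
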